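/- With W, ∈_W, =_W as in the implicative model of set theory, the term j := λx.e(p x ρ) belongs to Σ and satisfies j ≤ ⋀_{α∈W} ⋀_{u∈dom(α)}(α(u) → u ∈_W α). -/

import Mathlib

universe u v

/-- An implicative algebra: a complete lattice with an implication antitone in the
first argument, monotone in the second, distributing over arbitrary meets in the
second argument, together with a separator `Sep` which is upward closed, closed
under modus ponens, and contains the combinators K and S. -/
structure ImplicativeAlgebra (A : Type u) [CompleteLattice A] where
  imp : A → A → A
  imp_anti : ∀ ⦃a a' b : A⦄, a ≤ a' → imp a' b ≤ imp a b
  imp_mono : ∀ ⦃a b b' : A⦄, b ≤ b' → imp a b ≤ imp a b'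
  imp_sInf : ∀ (a : A) (S : Set A), imp a (sInf S) = ⨅ b ∈ S, imp a b
  Sep : Set A
  sep_upward : ∀ ⦃a b : A⦄, a ∈ Sep → a ≤ b → b ∈ Sep
  sep_mp : ∀ ⦃a b : A⦄, imp a b ∈ Sep → a ∈ Sep → b ∈ Sep
  sep_K : (⨅ a : A, ⨅ b : A, imp a (imp b a)) ∈ Sep
  sep_S : (⨅ a : A, ⨅ b : A, ⨅ c : A,
      imp (imp a (imp b c)) (imp (imp a b) (imp a c))) ∈ Sep

namespace ImplicativeAlgebra

variable {A : Type u} [CompleteLattice A] (𝔸 : ImplicativeAlgebra A)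

/-- Application: `a · b := ⋀ {x | a ≤ b → x}`. -/
def app (a b : A) : A := sInf {x : A | a ≤ 𝔸.imp b x}

/-- Implicative conjunction `a × b`. -/
def itimes (a b : A) : A := ⨅ x : A, 𝔸.imp (𝔸.imp a (𝔸.imp b x)) x

/-- Implicative disjunction `a + b`. -/
def iplus (a b : A) : A := ⨅ x : A, 𝔸.imp (𝔸.imp a x) (𝔸.imp (𝔸.imp b x) x)

/-- Second-order encoding of the existential quantifier. -/
def iexists {ι : Sort v} (f : ι → A) : A := ⨅ x : A, 𝔸.imp (⨅ i, 𝔸.imp (f i) x) x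

/-- Encoding of k = λx.λy.x. -/
def kComb : A := ⨅ a : A, 𝔸.imp a (⨅ b : A, 𝔸.imp b a)

/-- Encoding of λx.λy.y. -/
def kbarComb : A := ⨅ a : A, 𝔸.imp a (⨅ b : A, 𝔸.imp b b)

/-- Encoding of the pairing combinator p = λx.λy.λz.zxy. -/
def pComb : A := ⨅ a : A, 𝔸.imp a (⨅ b : A, 𝔸.imp b (⨅ c : A, 𝔸.imp c (𝔸.app (𝔸.app c a) b)))

/-- Encoding of the first projection p₁ = λu.u k. -/
def p1Comb : A := ⨅ u : A, 𝔸.imp u (𝔸.app u 𝔸.kComb)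

/-- Encoding of the second projection p₂ = λv.v k̄. -/
def p2Comb : A := ⨅ u : A, 𝔸.imp u (𝔸.app u 𝔸.kbarComb)

/-- Encoding of the existential-introduction combinator e = λx.λz.zx. -/
def eComb : A := ⨅ a : A, 𝔸.imp a (⨅ c : A, 𝔸.imp c (𝔸.app c a))

end ImplicativeAlgebra

/-- Names of the implicative model of set theory: a name is a (set-indexed)
family of previously constructed names, each labelled by a truth value in `A`
(a partial function from names to `A`, presented as a family). -/
inductive Name (A : Type u) : Type (u + 1)
  | mk (ι : Type u) (elem : ι → Name A) (val : ι → A) : Name A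

namespace Name

/-- The (index set of the) domain of a name. -/
def idx {A : Type u} : Name A → Type u
  | .mk ι _ _ => ι

/-- The elements of the domain of a name. -/
def elem {A : Type u} : (α : Name A) → α.idx → Name A
  | .mk _ e _ => e

/-- The truth value attached to each element of the domain of a name. -/
def val {A : Type u} : (α : Name A) → α.idx → A
  | .mk _ _ v => v

variable {A : Type u} [CompleteLattice A]

/-- `eqPair 𝔸 α β = (α ⊆_W β, β ⊆_W α)`, defined by simultaneous recursion,
where `α ⊆_W β := ⋀_{t ∈ dom α}(α(t) → t ∈_W β)` and
`t ∈_W β := ∃_{u ∈ dom β}(β(u) × (u =_W t))` and `u =_W t := (u ⊆_W t) × (t ⊆_W u)`. -/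
def eqPair (𝔸 : ImplicativeAlgebra A) : Name A → Name A → A × A
  | .mk _ e v, .mk _ e' v' =>
    (⨅ i, 𝔸.imp (v i) (𝔸.iexists fun j => 𝔸.itimes (v' j)
        (𝔸.itimes (eqPair 𝔸 (e i) (e' j)).2 (eqPair 𝔸 (e i) (e' j)).1)),
     ⨅ j, 𝔸.imp (v' j) (𝔸.iexists fun i => 𝔸.itimes (v i)
        (𝔸.itimes (eqPair 𝔸 (e i) (e' j)).1 (eqPair 𝔸 (e i) (e' j)).2)))

/-- `α ⊆_W β`. -/
def subW (𝔸 : ImplicativeAlgebra A) (α β : Name A) : A := (eqPair 𝔸 α β).1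

/-- `α =_W β := (α ⊆_W β) × (β ⊆_W α)`. -/
def eqW (𝔸 : ImplicativeAlgebra A) (α β : Name A) : A :=
  𝔸.itimes (eqPair 𝔸 α β).1 (eqPair 𝔸 α β).2

/-- `α ∈_W β := ∃_{t ∈ dom β}(β(t) × (t =_W α))`. -/
def memW (𝔸 : ImplicativeAlgebra A) (α β : Name A) : A :=
  𝔸.iexists fun j : β.idx => 𝔸.itimes (β.val j) (eqW 𝔸 (β.elem j) α)

end Name

/-! Combinatory completeness: `Sep` contains `K` and `S`, hence every λ-term built from elements
of `Sep`; this gives `e`, `p` and `j`. For the inequality, `p x ρ` realizes the pair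
`α(u) × (u =_W u)` because `ρ` realizes reflexivity, and `e` turns a realizer of the instance
`t = u` into a realizer of `∃_{t ∈ dom α}(α(t) × (t =_W u))`, which is `u ∈_W α`. -/

namespace ImplicativeAlgebra

variable {A : Type u} [CompleteLattice A] (𝔸 : ImplicativeAlgebra A)

local infixl:70 " ⬝ " => 𝔸.app

def lam (f : A → A) : A := ⨅ a, 𝔸.imp a (f a)

def sComb : A := ⨅ a : A, ⨅ b : A, ⨅ c : A,
  𝔸.imp (𝔸.imp a (𝔸.imp b c)) (𝔸.imp (𝔸.imp a b) (𝔸.imp a c))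

variable {𝔸}

theorem app_le_iff {a b c : A} : a ⬝ b ≤ c ↔ a ≤ 𝔸.imp b c := by
  refine ⟨fun h => ?_, fun h => sInf_le h⟩
  have hle : a ≤ 𝔸.imp b (a ⬝ b) := by
    rw [app, 𝔸.imp_sInf]
    exact le_iInf₂ fun x hx => hx
  exact hle.trans (𝔸.imp_mono h)

theorem app_mono {a a' b b' : A} (ha : a ≤ a') (hb : b ≤ b') : a ⬝ b ≤ a' ⬝ b' :=
  app_le_iff.2 <| ha.trans <| (app_le_iff.1 le_rfl).trans (𝔸.imp_anti hb)

theorem imp_app_le (a b : A) : 𝔸.imp a b ⬝ a ≤ b :=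
  app_le_iff.2 le_rfl

theorem app_mem_sep {a b : A} (ha : a ∈ 𝔸.Sep) (hb : b ∈ 𝔸.Sep) : a ⬝ b ∈ 𝔸.Sep :=
  𝔸.sep_mp (𝔸.sep_upward ha (app_le_iff.1 le_rfl)) hb

theorem le_lam_iff {t : A} {f : A → A} : t ≤ 𝔸.lam f ↔ ∀ a, t ⬝ a ≤ f a := by
  simp only [lam, le_iInf_iff, app_le_iff]

theorem lam_app_le (f : A → A) (a : A) : 𝔸.lam f ⬝ a ≤ f a :=
  le_lam_iff.1 le_rfl a

theorem lam_mono {f g : A → A} (h : ∀ a, f a ≤ g a) : 𝔸.lam f ≤ 𝔸.lam g :=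
  le_lam_iff.2 fun a => (lam_app_le f a).trans (h a)

theorem le_lam_app (t : A) : t ≤ 𝔸.lam (t ⬝ ·) :=
  le_lam_iff.2 fun _ => le_rfl

theorem kComb_app_le (c : A) : 𝔸.kComb ⬝ c ≤ 𝔸.lam fun _ => c :=
  lam_app_le _ c

theorem kComb_mem_sep : 𝔸.kComb ∈ 𝔸.Sep :=
  𝔸.sep_upward 𝔸.sep_K <| le_lam_iff.2 fun a => le_lam_iff.2 fun b =>
    app_le_iff.2 <| app_le_iff.2 <| (iInf_le _ a).trans (iInf_le _ b)

theorem sComb_mem_sep : 𝔸.sComb ∈ 𝔸.Sep := 𝔸.sep_S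

theorem sComb_app_app_app_le (a b c : A) : 𝔸.sComb ⬝ a ⬝ b ⬝ c ≤ a ⬝ c ⬝ (b ⬝ c) := by
  have ha : a ≤ 𝔸.imp c (𝔸.imp (b ⬝ c) (a ⬝ c ⬝ (b ⬝ c))) :=
    app_le_iff.1 (app_le_iff.1 le_rfl)
  have hb : b ≤ 𝔸.imp c (b ⬝ c) := app_le_iff.1 le_rfl
  have hS : 𝔸.sComb ≤ 𝔸.imp (𝔸.imp c (𝔸.imp (b ⬝ c) (a ⬝ c ⬝ (b ⬝ c))))
      (𝔸.imp (𝔸.imp c (b ⬝ c)) (𝔸.imp c (a ⬝ c ⬝ (b ⬝ c)))) :=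
    (iInf₂_le c (b ⬝ c)).trans (iInf_le _ _)
  have h₁ : 𝔸.sComb ⬝ a ≤ 𝔸.imp (𝔸.imp c (b ⬝ c)) (𝔸.imp c (a ⬝ c ⬝ (b ⬝ c))) :=
    app_le_iff.2 (hS.trans (𝔸.imp_anti ha))
  exact app_le_iff.2 <| app_le_iff.2 <| h₁.trans (𝔸.imp_anti hb)

theorem sComb_app_app_le_lam {t₁ t₂ : A} {f g : A → A} (h₁ : t₁ ≤ 𝔸.lam f)
    (h₂ : t₂ ≤ 𝔸.lam g) : 𝔸.sComb ⬝ t₁ ⬝ t₂ ≤ 𝔸.lam fun a => f a ⬝ g a :=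
  le_lam_iff.2 fun a => (sComb_app_app_app_le t₁ t₂ a).trans <|
    app_mono ((app_mono h₁ le_rfl).trans (lam_app_le f a))
      ((app_mono h₂ le_rfl).trans (lam_app_le g a))

theorem lam_const_mem_sep {c : A} (hc : c ∈ 𝔸.Sep) : (𝔸.lam fun _ => c) ∈ 𝔸.Sep :=
  𝔸.sep_upward (app_mem_sep kComb_mem_sep hc) (kComb_app_le c)

theorem lam_app_mem_sep {f g : A → A} (hf : 𝔸.lam f ∈ 𝔸.Sep) (hg : 𝔸.lam g ∈ 𝔸.Sep) :
    (𝔸.lam fun a => f a ⬝ g a) ∈ 𝔸.Sep :=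
  𝔸.sep_upward (app_mem_sep (app_mem_sep sComb_mem_sep hf) hg)
    (sComb_app_app_le_lam le_rfl le_rfl)

theorem lam_id_mem_sep : (𝔸.lam fun a => a) ∈ 𝔸.Sep :=
  𝔸.sep_upward (lam_app_mem_sep kComb_mem_sep kComb_mem_sep)
    (lam_mono fun _ => lam_app_le _ _)

theorem eComb_app_le (a : A) : 𝔸.eComb ⬝ a ≤ 𝔸.lam fun c => c ⬝ a :=
  lam_app_le _ a

-- `e = λa. S I (K a)`
theorem eComb_mem_sep : 𝔸.eComb ∈ 𝔸.Sep := by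
  refine 𝔸.sep_upward (lam_app_mem_sep (lam_const_mem_sep ?_) kComb_mem_sep)
    (lam_mono fun _ => sComb_app_app_le_lam le_rfl le_rfl)
  exact app_mem_sep sComb_mem_sep lam_id_mem_sep

theorem pComb_app_app_le (a b : A) : 𝔸.pComb ⬝ a ⬝ b ≤ 𝔸.lam fun c => c ⬝ a ⬝ b :=
  (app_mono (lam_app_le _ a) le_rfl).trans (lam_app_le _ b)

-- `p = λa. S (K (S (e a))) K`, since `λb. λc. c a b = λb. S (e a) (K b)`
theorem pComb_mem_sep : 𝔸.pComb ∈ 𝔸.Sep := by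
  have he : (𝔸.lam fun a => 𝔸.eComb ⬝ a) ∈ 𝔸.Sep :=
    𝔸.sep_upward eComb_mem_sep (le_lam_app _)
  have hS : (𝔸.lam fun _ => 𝔸.sComb) ∈ 𝔸.Sep := lam_const_mem_sep sComb_mem_sep
  have hK : (𝔸.lam fun _ => 𝔸.kComb) ∈ 𝔸.Sep := lam_const_mem_sep kComb_mem_sep
  refine 𝔸.sep_upward
    (lam_app_mem_sep (lam_app_mem_sep hS (lam_app_mem_sep hK (lam_app_mem_sep hS he))) hK)
    (lam_mono fun a => ?_)
  refine (sComb_app_app_le_lam (kComb_app_le _) (le_lam_app _)).trans (lam_mono fun b => ?_)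
  exact sComb_app_app_le_lam (eComb_app_le a) (kComb_app_le b)

theorem pComb_app_app_le_itimes (a b : A) : 𝔸.pComb ⬝ a ⬝ b ≤ 𝔸.itimes a b :=
  le_iInf fun _ => app_le_iff.1 <| (app_mono (pComb_app_app_le a b) le_rfl).trans <|
    (lam_app_le _ _).trans <| (app_mono (imp_app_le _ _) le_rfl).trans (imp_app_le _ _)

theorem eComb_app_le_iexists {ι : Sort v} {f : ι → A} {t : A} (i : ι) (ht : t ≤ f i) :
    𝔸.eComb ⬝ t ≤ 𝔸.iexists f :=
  le_iInf fun _ => app_le_iff.1 <| (app_mono (eComb_app_le t) le_rfl).trans <|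
    (lam_app_le _ _).trans <| (app_mono ((iInf_le _ i).trans (𝔸.imp_anti ht)) le_rfl).trans
      (imp_app_le _ _)

end ImplicativeAlgebra

open ImplicativeAlgebra

/-- the term j := λx.e(p x ρ) belongs to Σ and satisfies
j ≤ ⋀_{α∈W} ⋀_{u∈dom(α)}(α(u) → u ∈_W α). -/
theorem memW_intro_realized {A : Type u} [CompleteLattice A]
    (𝔸 : ImplicativeAlgebra A) (ρ : A) (hρSep : ρ ∈ 𝔸.Sep)
    (hρ : ρ ≤ ⨅ α : Name A, Name.eqW 𝔸 α α) :
    (⨅ a : A, 𝔸.imp a (𝔸.app 𝔸.eComb (𝔸.app (𝔸.app 𝔸.pComb a) ρ))) ∈ 𝔸.Sep ∧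
      (⨅ a : A, 𝔸.imp a (𝔸.app 𝔸.eComb (𝔸.app (𝔸.app 𝔸.pComb a) ρ))) ≤
        ⨅ α : Name A, ⨅ u : α.idx,
          𝔸.imp (α.val u) (Name.memW 𝔸 (α.elem u) α) := by
  constructor
  · exact lam_app_mem_sep (lam_const_mem_sep eComb_mem_sep)
      (lam_app_mem_sep (lam_app_mem_sep (lam_const_mem_sep pComb_mem_sep) lam_id_mem_sep)
        (lam_const_mem_sep hρSep))
  · refine le_iInf₂ fun α u => app_le_iff.1 <| (lam_app_le _ _).trans ?_
    have hpair : 𝔸.app (𝔸.app 𝔸.pComb (α.val u)) ρ ≤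
        𝔸.itimes (α.val u) (Name.eqW 𝔸 (α.elem u) (α.elem u)) :=
      (app_mono le_rfl (hρ.trans (iInf_le _ _))).trans (pComb_app_app_le_itimes _ _)
    exact eComb_app_le_iexists u hpair
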